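/- If the sequent Γ ⊢ A has a classical proof and A is not an atomic proposition, then the sequent ‖Γ‖ ⊢ ‖A‖ has a constructive proof. -/

import Mathlib

/-- Terms: de Bruijn variables and a binary function symbol (union). -/
inductive Tm : Type where
  | var : Nat → Tm
  | cup : Tm → Tm → Tm
deriving DecidableEq

def Tm.rename (f : Nat → Nat) : Tm → Tm
  | .var n => .var (f n)
  | .cup s t => .cup (s.rename f) (t.rename f)

def Tm.subst (σ : Nat → Tm) : Tm → Tm
  | .var n => σ n
  | .cup s t => .cup (s.subst σ) (t.subst σ)

/-- First-order formulas over Nat-indexed predicate symbols, de Bruijn binders. -/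
inductive Fm : Type where
  | atom : Nat → List Tm → Fm
  | top : Fm
  | bot : Fm
  | neg : Fm → Fm
  | and : Fm → Fm → Fm
  | or : Fm → Fm → Fm
  | imp : Fm → Fm → Fm
  | all : Fm → Fm
  | ex : Fm → Fm
deriving DecidableEq

def liftR (f : Nat → Nat) : Nat → Nat
  | 0 => 0
  | n + 1 => f n + 1

def liftS (σ : Nat → Tm) : Nat → Tm
  | 0 => .var 0
  | n + 1 => (σ n).rename Nat.succ

def Fm.rename (f : Nat → Nat) : Fm → Fm
  | .atom p l => .atom p (l.map (Tm.rename f))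
  | .top => .top
  | .bot => .bot
  | .neg A => .neg (A.rename f)
  | .and A B => .and (A.rename f) (B.rename f)
  | .or A B => .or (A.rename f) (B.rename f)
  | .imp A B => .imp (A.rename f) (B.rename f)
  | .all A => .all (A.rename (liftR f))
  | .ex A => .ex (A.rename (liftR f))

def Fm.subst (σ : Nat → Tm) : Fm → Fm
  | .atom p l => .atom p (l.map (Tm.subst σ))
  | .top => .top
  | .bot => .bot
  | .neg A => .neg (A.subst σ)
  | .and A B => .and (A.subst σ) (B.subst σ)
  | .or A B => .or (A.subst σ) (B.subst σ)
  | .imp A B => .imp (A.subst σ) (B.subst σ)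
  | .all A => .all (A.subst (liftS σ))
  | .ex A => .ex (A.subst (liftS σ))

/-- Shift all free variables up by one. -/
def Fm.shift (A : Fm) : Fm := A.rename Nat.succ

/-- Instantiate the outermost bound variable with term `t` : `(t/x)A`. -/
def Fm.inst (t : Tm) (A : Fm) : Fm :=
  A.subst (fun n => match n with | 0 => t | n + 1 => .var n)

/-- Double negation. -/
def Fm.dn (A : Fm) : Fm := .neg (.neg A)

/-- Cut-free classical multi-conclusion sequent calculus (Figure 1). -/
inductive Cl : List Fm → List Fm → Prop where
  | ax (A : Fm) : Cl [A] [A]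
  | perm {Γ Γ' Δ Δ'} : Γ.Perm Γ' → Δ.Perm Δ' → Cl Γ Δ → Cl Γ' Δ'
  | contrL {Γ Δ A} : Cl (A :: A :: Γ) Δ → Cl (A :: Γ) Δ
  | contrR {Γ Δ A} : Cl Γ (A :: A :: Δ) → Cl Γ (A :: Δ)
  | weakL {Γ Δ A} : Cl Γ Δ → Cl (A :: Γ) Δ
  | weakR {Γ Δ A} : Cl Γ Δ → Cl Γ (A :: Δ)
  | topR {Γ Δ} : Cl Γ (.top :: Δ)
  | botL {Γ Δ} : Cl (.bot :: Γ) Δ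
  | negL {Γ Δ A} : Cl Γ (A :: Δ) → Cl (.neg A :: Γ) Δ
  | negR {Γ Δ A} : Cl (A :: Γ) Δ → Cl Γ (.neg A :: Δ)
  | andL {Γ Δ A B} : Cl (A :: B :: Γ) Δ → Cl (.and A B :: Γ) Δ
  | andR {Γ Δ A B} : Cl Γ (A :: Δ) → Cl Γ (B :: Δ) → Cl Γ (.and A B :: Δ)
  | orL {Γ Δ A B} : Cl (A :: Γ) Δ → Cl (B :: Γ) Δ → Cl (.or A B :: Γ) Δ
  | orR1 {Γ Δ A B} : Cl Γ (A :: Δ) → Cl Γ (.or A B :: Δ)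
  | orR2 {Γ Δ A B} : Cl Γ (B :: Δ) → Cl Γ (.or A B :: Δ)
  | impL {Γ Δ A B} : Cl Γ (A :: Δ) → Cl (B :: Γ) Δ → Cl (.imp A B :: Γ) Δ
  | impR {Γ Δ A B} : Cl (A :: Γ) (B :: Δ) → Cl Γ (.imp A B :: Δ)
  | allL {Γ Δ A} (t : Tm) : Cl (A.inst t :: Γ) Δ → Cl (.all A :: Γ) Δ
  | allR {Γ Δ A} : Cl (Γ.map Fm.shift) (A :: Δ.map Fm.shift) → Cl Γ (.all A :: Δ)
  | exL {Γ Δ A} : Cl (A :: Γ.map Fm.shift) (Δ.map Fm.shift) → Cl (.ex A :: Γ) Δ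
  | exR {Γ Δ A} (t : Tm) : Cl Γ (A.inst t :: Δ) → Cl Γ (.ex A :: Δ)

/-- Constructive (intuitionistic) single-conclusion sequent calculus:
the restriction of the classical calculus to sequents with at most one
conclusion, with the adapted ⇒-left rule. -/
inductive Intu : List Fm → Option Fm → Prop where
  | ax (A : Fm) : Intu [A] (some A)
  | perm {Γ Γ' Δ} : Γ.Perm Γ' → Intu Γ Δ → Intu Γ' Δ
  | contrL {Γ Δ A} : Intu (A :: A :: Γ) Δ → Intu (A :: Γ) Δ
  | weakL {Γ Δ A} : Intu Γ Δ → Intu (A :: Γ) Δ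
  | weakR {Γ A} : Intu Γ none → Intu Γ (some A)
  | topR {Γ} : Intu Γ (some .top)
  | botL {Γ Δ} : Intu (.bot :: Γ) Δ
  | negL {Γ A} : Intu Γ (some A) → Intu (.neg A :: Γ) none
  | negR {Γ A} : Intu (A :: Γ) none → Intu Γ (some (.neg A))
  | andL {Γ Δ A B} : Intu (A :: B :: Γ) Δ → Intu (.and A B :: Γ) Δ
  | andR {Γ A B} : Intu Γ (some A) → Intu Γ (some B) → Intu Γ (some (.and A B))
  | orL {Γ Δ A B} : Intu (A :: Γ) Δ → Intu (B :: Γ) Δ → Intu (.or A B :: Γ) Δ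
  | orR1 {Γ A B} : Intu Γ (some A) → Intu Γ (some (.or A B))
  | orR2 {Γ A B} : Intu Γ (some B) → Intu Γ (some (.or A B))
  | impL {Γ Δ A B} : Intu Γ (some A) → Intu (B :: Γ) Δ → Intu (.imp A B :: Γ) Δ
  | impR {Γ A B} : Intu (A :: Γ) (some B) → Intu Γ (some (.imp A B))
  | allL {Γ Δ A} (t : Tm) : Intu (A.inst t :: Γ) Δ → Intu (.all A :: Γ) Δ
  | allR {Γ A} : Intu (Γ.map Fm.shift) (some A) → Intu Γ (some (.all A))
  | exL {Γ Δ A} : Intu (A :: Γ.map Fm.shift) (Δ.map Fm.shift) → Intu (.ex A :: Γ) Δ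
  | exR {Γ A} (t : Tm) : Intu Γ (some (A.inst t)) → Intu Γ (some (.ex A))

/-- Dowek's translation ‖·‖: double negations both before and after each
connective and quantifier, atoms unchanged. -/
def Fm.bar : Fm → Fm
  | .atom p l => .atom p l
  | .top => Fm.dn .top
  | .bot => Fm.dn .bot
  | .neg A => Fm.dn (Fm.dn (.neg A.bar))
  | .and A B => Fm.dn (.and (Fm.dn A.bar) (Fm.dn B.bar))
  | .or A B => Fm.dn (.or (Fm.dn A.bar) (Fm.dn B.bar))
  | .imp A B => Fm.dn (.imp (Fm.dn A.bar) (Fm.dn B.bar))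
  | .all A => Fm.dn (.all (Fm.dn A.bar))
  | .ex A => Fm.dn (.ex (Fm.dn A.bar))

/-- The light translation |·|: like ‖·‖ but the outermost double negation
is removed. -/
def Fm.light : Fm → Fm
  | .atom p l => .atom p l
  | .top => .top
  | .bot => .bot
  | .neg A => .neg (Fm.dn A.bar)
  | .and A B => .and (Fm.dn A.bar) (Fm.dn B.bar)
  | .or A B => .or (Fm.dn A.bar) (Fm.dn B.bar)
  | .imp A B => .imp (Fm.dn A.bar) (Fm.dn B.bar)
  | .all A => .all (Fm.dn A.bar)
  | .ex A => .ex (Fm.dn A.bar)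

/-- A formula is atomic if it is of the form `atom p l`. -/
def Fm.isAtom : Fm → Prop
  | .atom _ _ => True
  | _ => False

/-!
Write `|A|` for the light translation, so that `‖A‖ = ¬¬|A|` unless `A` is atomic, in which
case `‖A‖ = |A| = A`. By induction on a cut-free classical derivation, `Γ ⊢ Δ` yields a
constructive derivation of `‖Γ‖, ¬|Δ| ⊢` with empty conclusion: every classical rule becomes
its constructive counterpart wrapped in the double negations of the translation, and a
hypothesis `¬|B|` can be traded for `¬‖B‖ = ¬¬¬|B|` without cut. For `Γ ⊢ A` with `A` not
atomic, the right negation rule turns `‖Γ‖, ¬|A| ⊢` into `‖Γ‖ ⊢ ¬¬|A| = ‖A‖`.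
-/

theorem Fm.bar_rename (A : Fm) : ∀ f, (A.rename f).bar = A.bar.rename f := by
  induction A <;> intro f <;> simp [Fm.rename, Fm.bar, Fm.dn, *]

theorem Fm.bar_subst (A : Fm) : ∀ σ, (A.subst σ).bar = A.bar.subst σ := by
  induction A <;> intro σ <;> simp [Fm.subst, Fm.bar, Fm.dn, *]

theorem Fm.bar_inst (A : Fm) (t : Tm) : (A.inst t).bar = A.bar.inst t := A.bar_subst _

theorem Fm.light_rename (A : Fm) (f : Nat → Nat) : (A.rename f).light = A.light.rename f := by
  cases A <;> simp [Fm.rename, Fm.light, Fm.dn, Fm.bar_rename]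

theorem Fm.bar_eq_dn_light {A : Fm} (hA : ¬A.isAtom) : A.bar = A.light.dn := by
  cases A <;> first | exact absurd trivial hA | rfl

theorem Fm.map_bar_map_shift (Γ : List Fm) :
    (Γ.map Fm.shift).map Fm.bar = (Γ.map Fm.bar).map Fm.shift := by
  simp only [List.map_map]
  exact List.map_congr_left fun A _ => A.bar_rename _

theorem Fm.map_neg_light_map_shift (Δ : List Fm) :
    (Δ.map Fm.shift).map (fun D => Fm.neg D.light) =
      (Δ.map (fun D => Fm.neg D.light)).map Fm.shift := by
  simp only [List.map_map]
  exact List.map_congr_left fun A _ => congrArg Fm.neg (A.light_rename _)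

namespace Intu

theorem dnL {Γ : List Fm} {X : Fm} (h : Intu (X :: Γ) none) : Intu (X.dn :: Γ) none :=
  negL (negR h)

theorem negL_middle {Γ₁ Γ₂ : List Fm} {A : Fm} (h : Intu (Γ₁ ++ Γ₂) (some A)) :
    Intu (Γ₁ ++ Fm.neg A :: Γ₂) none :=
  (negL h).perm List.perm_middle.symm

theorem neg_bar_of_neg_light {Γ₁ Γ₂ : List Fm} {A : Fm}
    (h : Intu (Γ₁ ++ Fm.neg A.light :: Γ₂) none) : Intu (Fm.neg A.bar :: (Γ₁ ++ Γ₂)) none := by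
  replace h := h.perm List.perm_middle
  by_cases hA : A.isAtom
  · cases A <;> first | exact h | exact (hA : False).elim
  · rw [Fm.bar_eq_dn_light hA]
    exact dnL h

end Intu

open Intu in
theorem intu_bar_neg_light_of_cl {Γ Δ : List Fm} (h : Cl Γ Δ) :
    Intu (Γ.map Fm.bar ++ Δ.map (fun D => Fm.neg D.light)) none := by
  induction h with
  | ax A =>
    by_cases hA : A.isAtom
    · cases A <;> first | exact (negL (ax _)).perm (.swap _ _ _) | exact (hA : False).elim
    · show Intu [A.bar, Fm.neg A.light] none
      rw [Fm.bar_eq_dn_light hA]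
      exact negL (ax _)
  | perm pΓ pΔ _ ih => exact ih.perm ((pΓ.map _).append (pΔ.map _))
  | contrL _ ih => exact contrL ih
  | contrR _ ih =>
    refine (contrL ?_).perm List.perm_middle.symm
    exact ih.perm (List.perm_middle.trans (.cons _ List.perm_middle))
  | weakL _ ih => exact weakL ih
  | weakR _ ih => exact (weakL ih).perm List.perm_middle.symm
  | topR => exact negL_middle topR
  | botL => exact dnL botL
  | negL _ ih => exact dnL (negL (negR (neg_bar_of_neg_light ih)))
  | negR _ ih => exact (dnL (dnL ih)).perm List.perm_middle.symm
  | andL _ ih =>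
    refine dnL (andL (dnL ?_))
    exact (dnL (ih.perm (.swap _ _ _))).perm (.swap _ _ _)
  | andR _ _ ih₁ ih₂ =>
    refine negL_middle (andR ?_ ?_)
    · exact negR (neg_bar_of_neg_light ih₁)
    · exact negR (neg_bar_of_neg_light ih₂)
  | orL _ _ ih₁ ih₂ => exact dnL (orL (dnL ih₁) (dnL ih₂))
  | orR1 _ ih => exact negL_middle (orR1 (negR (neg_bar_of_neg_light ih)))
  | orR2 _ ih => exact negL_middle (orR2 (negR (neg_bar_of_neg_light ih)))
  | impL _ _ ih₁ ih₂ => exact dnL (impL (negR (neg_bar_of_neg_light ih₁)) (dnL ih₂))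
  | impR _ ih =>
    refine negL_middle (impR (negR ?_))
    refine (dnL ?_).perm (.swap _ _ _)
    exact (neg_bar_of_neg_light (Γ₁ := _ :: _) ih).perm (.swap _ _ _)
  | allL t _ ih =>
    rw [List.map_cons, Fm.bar_inst] at ih
    exact dnL (allL t (dnL ih))
  | allR _ ih =>
    simp only [List.map_cons, Fm.map_bar_map_shift, Fm.map_neg_light_map_shift] at ih ⊢
    refine negL_middle (allR (negR ?_))
    simpa only [List.map_append] using neg_bar_of_neg_light ih
  | exL _ ih =>
    simp only [List.map_cons, List.cons_append, Fm.map_bar_map_shift,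
      Fm.map_neg_light_map_shift] at ih ⊢
    refine dnL (exL ?_)
    simpa only [Option.map_none, List.map_append] using dnL ih
  | exR t _ ih =>
    refine negL_middle (exR t (negR ?_))
    have h := neg_bar_of_neg_light ih
    rwa [Fm.bar_inst] at h

theorem stmt3 (Γ : List Fm) (A : Fm) (h : Cl Γ [A]) (hA : ¬ A.isAtom) :
    Intu (Γ.map Fm.bar) (some A.bar) := by
  have hneg : Intu (Fm.neg A.light :: Γ.map Fm.bar) none := by
    simpa using (intu_bar_neg_light_of_cl h).perm List.perm_middle
  rw [Fm.bar_eq_dn_light hA]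
  exact Intu.negR hneg
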